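/- Let n ≥ 5 with n ≡ 2 (mod 4). Then the critical group K(KG(n,2)) has odd order; that is, 2 does not divide the cardinality of the torsion subgroup of ℤ^V / im(L), where L is the Laplacian of KG(n,2). -/

import Mathlib

/-!
A class of order 2 in the critical group is represented by some `y` with `2y = Lx`. Modulo 2
this says `L̄x̄ = 0`. For `n ≡ 2 (mod 4)` every degree `C(n-2, 2)` is even, so `L̄ = Ā`, and for
even `n` the kernel of `Ā` over `𝔽₂` consists of constant vectors: with `S = Σ x̄` and
`r a = Σ_{v ∋ a} x̄ v`, inclusion–exclusion gives `x̄ {a, b} = S + r a + r b`, summing this over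
`b ≠ a` (an odd number of terms) gives `r a = S + Σ r`, hence `x̄ ≡ S`. So `x = c𝟙 + 2z`, and as
`L𝟙 = 0`, `y = Lz`: the class vanishes, and Cauchy's theorem rules out even order.
-/

/-- Vertices of the Kneser graph `KG(n,2)`: the 2-element subsets of an `n`-element set. -/
abbrev KneserVertex (n : ℕ) := {s : Finset (Fin n) // s.card = 2}

/-- The Kneser graph `KG(n,2)`: 2-subsets are adjacent iff they are disjoint. -/
def kneserGraph2 (n : ℕ) : SimpleGraph (KneserVertex n) where
  Adj u v := Disjoint u.1 v.1
  symm := ⟨fun _ _ h => h.symm⟩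
  loopless := ⟨fun u h => by
    simp only [disjoint_self, Finset.bot_eq_empty] at h
    have hu := u.2
    rw [h] at hu
    simp at hu⟩

instance (n : ℕ) : DecidableRel (kneserGraph2 n).Adj :=
  fun u v => inferInstanceAs (Decidable (Disjoint u.1 v.1))

/-- The Laplacian matrix of `KG(n,2)` over the integers. -/
noncomputable def kneserLaplacian (n : ℕ) : Matrix (KneserVertex n) (KneserVertex n) ℤ :=
  SimpleGraph.lapMatrix ℤ (kneserGraph2 n)

/-- The cokernel `ℤ^V / im L` of the Laplacian of `KG(n,2)`. -/
noncomputable abbrev KneserCokernel (n : ℕ) :=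
  (KneserVertex n → ℤ) ⧸ LinearMap.range (Matrix.mulVecLin (kneserLaplacian n))

/-- The critical group of `KG(n,2)`: the torsion subgroup of the cokernel of the Laplacian. -/
noncomputable def criticalGroup (n : ℕ) : AddSubgroup (KneserCokernel n) :=
  AddCommGroup.torsion (KneserCokernel n)

open Finset Matrix SimpleGraph

theorem Submodule.not_dvd_card_torsion_quotient {M : Type*} [AddCommGroup M] [Module.Finite ℤ M]
    (N : Submodule ℤ M) {p : ℕ} (hp : p.Prime) (hN : ∀ y : M, (p : ℤ) • y ∈ N → y ∈ N) :
    ¬ p ∣ Nat.card (AddCommGroup.torsion (M ⧸ N)) := by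
  intro hdvd
  have : Finite (AddCommGroup.torsion (M ⧸ N)) := by
    have : Finite (Submodule.torsion ℤ (M ⧸ N)) :=
      Module.finite_of_fg_torsion _ Submodule.torsion_isTorsion
    rwa [← Submodule.torsion_int]
  have : Fact p.Prime := ⟨hp⟩
  obtain ⟨g, hg⟩ := exists_prime_addOrderOf_dvd_card' p hdvd
  obtain ⟨y, hy⟩ := Submodule.Quotient.mk_surjective N (g : M ⧸ N)
  have hpy : (p : ℤ) • y ∈ N := by
    rw [← Submodule.Quotient.mk_eq_zero, Submodule.Quotient.mk_smul, hy, natCast_zsmul,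
      ← AddSubgroup.coe_nsmul, ← hg, addOrderOf_nsmul_eq_zero, AddSubgroup.coe_zero]
  have hg0 : g = 0 := by
    rw [← ZeroMemClass.coe_eq_zero, ← hy, Submodule.Quotient.mk_eq_zero]
    exact hN y hpy
  rw [hg0, addOrderOf_zero] at hg
  exact hp.one_lt.ne hg

namespace SimpleGraph

variable {V : Type*} [Fintype V] [DecidableEq V] (G : SimpleGraph V) [DecidableRel G.Adj]

theorem lapMatrix_map_intCast {R : Type*} [Ring R] :
    (G.lapMatrix ℤ).map (Int.cast : ℤ → R) = G.lapMatrix R := by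
  ext i j
  simp [lapMatrix, degMatrix, diagonal_apply, adjMatrix_apply, apply_ite (Int.cast : ℤ → R)]

theorem lapMatrix_eq_neg_adjMatrix {R : Type*} [Ring R] (h : ∀ v, (G.degree v : R) = 0) :
    G.lapMatrix R = -G.adjMatrix R := by
  rw [lapMatrix, degMatrix, funext h, diagonal_zero, zero_sub]

theorem mem_range_lapMatrix_of_smul_mem {p : ℕ} [NeZero p]
    (hker : ∀ x : V → ZMod p, G.lapMatrix (ZMod p) *ᵥ x = 0 → ∃ c, x = fun _ ↦ c)
    {y : V → ℤ} (hy : (p : ℤ) • y ∈ LinearMap.range (G.lapMatrix ℤ).mulVecLin) :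
    y ∈ LinearMap.range (G.lapMatrix ℤ).mulVecLin := by
  obtain ⟨x, hx⟩ := hy
  rw [mulVecLin_apply] at hx
  have hxp : G.lapMatrix (ZMod p) *ᵥ (Int.cast ∘ x) = 0 := by
    ext v
    have := RingHom.map_mulVec (Int.castRingHom (ZMod p)) (G.lapMatrix ℤ) x v
    simp_all [lapMatrix_map_intCast]
  obtain ⟨c, hc⟩ := hker _ hxp
  obtain ⟨k, rfl⟩ := ZMod.intCast_surjective c
  have hdvd : ∀ v, (p : ℤ) ∣ x v - k := fun v ↦
    (ZMod.intCast_eq_intCast_iff_dvd_sub _ _ _).mp (congrFun hc v).symm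
  refine ⟨fun v ↦ (x v - k) / p, ?_⟩
  have hx' : x = k • (fun _ ↦ 1) + (p : ℤ) • fun v ↦ (x v - k) / p := by
    ext v
    simp [Int.mul_ediv_cancel' (hdvd v)]
  rw [hx', mulVec_add, mulVec_smul, mulVec_smul, lapMatrix_mulVec_const_eq_zero, smul_zero,
    zero_add] at hx
  exact smul_right_injective _ (by exact_mod_cast NeZero.ne p) hx

end SimpleGraph

theorem Nat.even_choose_two_of_four_dvd {m : ℕ} (hm : 4 ∣ m) : Even (m.choose 2) := by
  obtain ⟨k, rfl⟩ := hm
  refine ⟨k * (4 * k - 1), ?_⟩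
  rw [Nat.choose_two_right, show 4 * k * (4 * k - 1) = 2 * (2 * k * (4 * k - 1)) by ring,
    Nat.mul_div_cancel_left _ two_pos]
  ring

theorem kneserGraph2_degree {n : ℕ} (u : KneserVertex n) :
    (kneserGraph2 n).degree u = (n - 2).choose 2 := by
  have hcard : #((u.1ᶜ).powersetCard 2) = (n - 2).choose 2 := by
    rw [card_powersetCard, card_compl, u.2, Fintype.card_fin]
  rw [← card_neighborFinset_eq_degree, neighborFinset_eq_filter, ← hcard]
  refine card_nbij Subtype.val (fun v hv ↦ ?_) Subtype.val_injective.injOn fun s hs ↦ ?_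
  · replace hv : Disjoint u.1 v.1 := (mem_filter.mp hv).2
    exact mem_powersetCard.mpr ⟨fun i hi ↦ mem_compl.mpr (disjoint_right.mp hv hi), v.2⟩
  · obtain ⟨hsub, hs2⟩ := mem_powersetCard.mp hs
    refine ⟨⟨s, hs2⟩, mem_filter.mpr ⟨mem_univ _, ?_⟩, rfl⟩
    exact disjoint_right.mpr fun i hi ↦ mem_compl.mp (hsub hi)

namespace KneserVertex

variable {n : ℕ}

theorem filter_mem_and_mem_eq_singleton {a b : Fin n} (hab : a ≠ b) (u : KneserVertex n)
    (hu : u.1 = {a, b}) : univ.filter (fun v : KneserVertex n ↦ a ∈ v.1 ∧ b ∈ v.1) = {u} := by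
  ext v
  simp only [mem_filter, mem_univ, true_and, mem_singleton]
  constructor
  · rintro ⟨ha, hb⟩
    refine Subtype.ext (Eq.symm ?_)
    rw [hu]
    refine eq_of_subset_of_card_le (insert_subset ha (singleton_subset_iff.mpr hb)) ?_
    rw [v.2, card_pair hab]
  · rintro rfl
    simp [hu]

theorem sum_not_disjoint_add {M : Type*} [AddCommMonoid M] (y : KneserVertex n → M)
    (u : KneserVertex n) :
    ∑ v with ¬ Disjoint u.1 v.1, y v + y u = ∑ i ∈ u.1, ∑ v with i ∈ v.1, y v := by
  obtain ⟨a, b, hab, hu⟩ := card_eq_two.mp u.2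
  have hmeet : univ.filter (fun v : KneserVertex n ↦ ¬ Disjoint u.1 v.1)
      = univ.filter (fun v : KneserVertex n ↦ a ∈ v.1) ∪ univ.filter (fun v ↦ b ∈ v.1) := by
    rw [← filter_or]
    refine filter_congr fun v _ ↦ ?_
    simp only [hu, disjoint_insert_left, disjoint_singleton_left]
    tauto
  rw [hmeet, hu, sum_pair hab, ← sum_union_inter, ← filter_and,
    filter_mem_and_mem_eq_singleton hab u hu, sum_singleton]

theorem sum_filter_mem_eq_sum_erase {M : Type*} [AddCommMonoid M] (g : Finset (Fin n) → M)
    (a : Fin n) : ∑ v : KneserVertex n with a ∈ v.1, g v.1 = ∑ b ∈ univ.erase a, g {a, b} := by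
  symm
  refine sum_bij (fun b hb ↦ ⟨{a, b}, card_pair (ne_of_mem_erase hb).symm⟩) (by simp) ?_ ?_
    fun _ _ ↦ rfl
  · intro b₁ hb₁ b₂ hb₂ h
    have := congrArg (fun s : KneserVertex n ↦ s.1.erase a) h
    simpa [erase_insert, (ne_of_mem_erase hb₁).symm, (ne_of_mem_erase hb₂).symm] using this
  · intro v hv
    have ha : a ∈ v.1 := (mem_filter.mp hv).2
    obtain ⟨c, d, hcd, hv'⟩ := card_eq_two.mp v.2
    rw [hv', mem_insert, mem_singleton] at ha
    rcases ha with rfl | rfl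
    · exact ⟨d, by simp [hcd.symm], Subtype.ext hv'.symm⟩
    · exact ⟨c, by simp [hcd], Subtype.ext (hv'.trans (pair_comm _ _)).symm⟩

end KneserVertex

theorem kneserGraph2_exists_const_of_adjMatrix_mulVec_eq_zero {n : ℕ} (hn : Even n)
    {y : KneserVertex n → ZMod 2} (hy : (kneserGraph2 n).adjMatrix (ZMod 2) *ᵥ y = 0) :
    ∃ c, y = fun _ ↦ c := by
  set S := ∑ v, y v
  set r : Fin n → ZMod 2 := fun i ↦ ∑ v with i ∈ v.1, y v
  have hvertex : ∀ u, y u = S + ∑ i ∈ u.1, r i := by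
    intro u
    have hdisj : ∑ v with Disjoint u.1 v.1, y v = 0 := by
      have := congrFun hy u
      rwa [adjMatrix_mulVec_apply, neighborFinset_eq_filter] at this
    have hS := sum_filter_add_sum_filter_not univ (fun v ↦ Disjoint u.1 v.1) y
    rw [hdisj, zero_add] at hS
    linear_combination KneserVertex.sum_not_disjoint_add y u - hS - CharTwo.add_self_eq_zero S
  have hpoint : ∀ a, r a = S + ∑ i, r i := by
    intro a
    have hodd : ((n - 1 : ℕ) : ZMod 2) = 1 :=
      ZMod.natCast_eq_one_iff_odd.mpr (Nat.Even.sub_odd a.pos hn odd_one)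
    calc r a = ∑ v with a ∈ v.1, (S + ∑ i ∈ v.1, r i) := sum_congr rfl fun v _ ↦ hvertex v
      _ = ∑ b ∈ univ.erase a, (S + ∑ i ∈ {a, b}, r i) :=
        KneserVertex.sum_filter_mem_eq_sum_erase (fun s ↦ S + ∑ i ∈ s, r i) a
      _ = ∑ b ∈ univ.erase a, ((S + r a) + r b) :=
        sum_congr rfl fun b hb ↦ by rw [sum_pair (ne_of_mem_erase hb).symm, add_assoc]
      _ = (S + r a) + (∑ i, r i - r a) := by
        rw [sum_add_distrib, sum_const, card_erase_of_mem (mem_univ a), card_univ,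
          Fintype.card_fin, nsmul_eq_mul, hodd, one_mul, ← sum_erase_add univ r (mem_univ a),
          add_sub_cancel_right]
      _ = S + ∑ i, r i := by ring
  refine ⟨S, funext fun u ↦ ?_⟩
  rw [hvertex u, sum_congr rfl fun i _ ↦ hpoint i, sum_const, u.2, two_nsmul,
    CharTwo.add_self_eq_zero, add_zero]

theorem kneser_critical_group_odd_order_two_mod_four_general (n : ℕ)
    (hmod : n % 4 = 2) :
    ¬ 2 ∣ Nat.card (criticalGroup n) := by
  have hdeg : ∀ u, ((kneserGraph2 n).degree u : ZMod 2) = 0 := fun u ↦ by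
    rw [kneserGraph2_degree, ZMod.natCast_eq_zero_iff_even]
    exact Nat.even_choose_two_of_four_dvd (by omega)
  have hker : ∀ x : KneserVertex n → ZMod 2,
      (kneserGraph2 n).lapMatrix (ZMod 2) *ᵥ x = 0 → ∃ c, x = fun _ ↦ c := by
    intro x hx
    rw [lapMatrix_eq_neg_adjMatrix _ hdeg, neg_mulVec, neg_eq_zero] at hx
    exact kneserGraph2_exists_const_of_adjMatrix_mulVec_eq_zero (Nat.even_iff.mpr (by omega)) hx
  exact Submodule.not_dvd_card_torsion_quotient _ Nat.prime_two
    fun _ ↦ (kneserGraph2 n).mem_range_lapMatrix_of_smul_mem hker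

theorem kneser_critical_group_odd_order_two_mod_four (n : ℕ) (hn : 5 ≤ n)
    (hmod : n % 4 = 2) :
    ¬ 2 ∣ Nat.card (criticalGroup n) :=
  kneser_critical_group_odd_order_two_mod_four_general n hmod
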